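/- Let B be a nonempty finite index set of cardinality b and let f_i : ℝ^d → ℝ (i ∈ B) be differentiable with L-Lipschitz gradients (L ≥ 0) and ‖∇f_i(y)‖∞ ≤ G for all y ∈ ℝ^d; let f : ℝ^d → ℝ be differentiable, and let x, s ∈ ℝ^d with s ≠ 0 satisfy ‖(1/b) Σ_{i∈B} ∇f_i(x) − ∇f(x)‖² ≤ σ²/b for some σ ≥ 0. Let β₁ ∈ [0,1), γ ∈ ℝ, ρ ≥ 0, ε > 0, β > 0, let m ∈ ℝ^d with ‖m‖∞ ≤ G, let η_prev ∈ ℝ^d with 0 ≤ (η_prev)_j ≤ 1/ε for every coordinate j, and let η ∈ ℝ^d be arbitrary. Set g = (1/b) Σ_{i∈B} ∇f_i(x + ρ s/‖s‖) and Δ = (γ β₁/(1 − β₁)) m ⊙ (η_prev − η) − γ (g ⊙ η). Then (L/2) ‖Δ‖² ≤ (L G² γ² β₁²/(1 − β₁)²) ‖η − η_prev‖² + γ² L [ (3(1 + β)/(β ε)) (‖∇f(x) ⊙ √η_prev‖² + L²ρ²/ε + σ²/(bε)) + (1 + β) G² ‖η − η_prev‖² ]. -/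

import Mathlib

/-!
Split `Δ` into its momentum part and its gradient part. The momentum part is controlled by the
`ℓ∞` bound on `m`. For the gradient part, write `g ⊙ η = g ⊙ η_prev + g ⊙ (η − η_prev)` and apply
Young's inequality with parameter `β`; the second piece is controlled by the `ℓ∞` bound on `g`.
Since `η_prev ≤ 1/ε`, the first piece is at most `(1/ε)‖g ⊙ √η_prev‖²`, and
`g = ∇f(x) + (ḡ(x) − ∇f(x)) + (g − ḡ(x))`, where `ḡ(x)` is the mini-batch gradient at `x`:
the middle term is the sampling error and the last is at most `Lρ`, because `g` is the mini-batch
gradient at a point at distance at most `ρ` from `x`.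
-/

/-- The coordinatewise (Hadamard) product on `EuclideanSpace ℝ (Fin d)`. -/
noncomputable def had {d : ℕ} (x y : EuclideanSpace ℝ (Fin d)) : EuclideanSpace ℝ (Fin d) :=
  (WithLp.equiv 2 (Fin d → ℝ)).symm (fun j => x j * y j)

/-- The coordinatewise square root on `EuclideanSpace ℝ (Fin d)`. -/
noncomputable def vsqrt {d : ℕ} (x : EuclideanSpace ℝ (Fin d)) : EuclideanSpace ℝ (Fin d) :=
  (WithLp.equiv 2 (Fin d → ℝ)).symm (fun j => Real.sqrt (x j))

open Finset

section Average

variable {ι F : Type*} [SeminormedAddCommGroup F] [NormedSpace ℝ F]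

lemma norm_avg_le {B : Finset ι} (hB : B.Nonempty) {w : ι → F} {r : ℝ}
    (h : ∀ i ∈ B, ‖w i‖ ≤ r) : ‖(1 / (#B : ℝ)) • ∑ i ∈ B, w i‖ ≤ r := by
  have hcard : (0 : ℝ) < #B := by exact_mod_cast hB.card_pos
  rw [norm_smul, Real.norm_of_nonneg (by positivity), one_div, inv_mul_le_iff₀ hcard]
  calc ‖∑ i ∈ B, w i‖ ≤ ∑ i ∈ B, ‖w i‖ := norm_sum_le _ _
    _ ≤ #B • r := sum_le_card_nsmul _ _ _ h
    _ = #B * r := nsmul_eq_mul _ _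

lemma norm_avg_sub_avg_le {E : Type*} [SeminormedAddCommGroup E] {B : Finset ι}
    (hB : B.Nonempty) {φ : ι → E → F} {L : ℝ}
    (hφ : ∀ i ∈ B, ∀ u v, ‖φ i u - φ i v‖ ≤ L * ‖u - v‖) (u v : E) :
    ‖(1 / (#B : ℝ)) • ∑ i ∈ B, φ i u - (1 / (#B : ℝ)) • ∑ i ∈ B, φ i v‖ ≤ L * ‖u - v‖ := by
  rw [← smul_sub, ← sum_sub_distrib]
  exact norm_avg_le hB fun i hi => hφ i hi u v

lemma abs_avg_apply_le {n : Type*} [Fintype n] {B : Finset ι} (hB : B.Nonempty)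
    {w : ι → EuclideanSpace ℝ n} {G : ℝ} (h : ∀ i ∈ B, ∀ j, |w i j| ≤ G) (j : n) :
    |((1 / (#B : ℝ)) • ∑ i ∈ B, w i) j| ≤ G := by
  simpa using norm_avg_le hB (w := fun i => w i j) fun i hi => h i hi j

end Average

lemma norm_smul_div_norm_le {E : Type*} [SeminormedAddCommGroup E] [NormedSpace ℝ E]
    {ρ : ℝ} (hρ : 0 ≤ ρ) (s : E) : ‖(ρ / ‖s‖) • s‖ ≤ ρ := by
  rcases (norm_nonneg s).eq_or_lt with hs | hs
  · simp [← hs, hρ]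
  · rw [norm_smul, Real.norm_of_nonneg (div_nonneg hρ hs.le), div_mul_cancel₀ _ hs.ne']

section NormSq

variable {E : Type*} [SeminormedAddCommGroup E]

lemma norm_sub_sq_le (u v : E) : ‖u - v‖ ^ 2 ≤ 2 * (‖u‖ ^ 2 + ‖v‖ ^ 2) :=
  (pow_le_pow_left₀ (norm_nonneg _) (norm_sub_le u v) 2).trans add_sq_le

lemma norm_add₃_sq_le (u v w : E) : ‖u + v + w‖ ^ 2 ≤ 3 * (‖u‖ ^ 2 + ‖v‖ ^ 2 + ‖w‖ ^ 2) := by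
  have := pow_le_pow_left₀ (norm_nonneg _) (norm_add₃_le (a := u) (b := v) (c := w)) 2
  nlinarith [sq_nonneg (‖u‖ - ‖v‖), sq_nonneg (‖v‖ - ‖w‖), sq_nonneg (‖u‖ - ‖w‖)]

lemma norm_add_sq_le_young (u v : E) {c : ℝ} (hc : 0 < c) :
    ‖u + v‖ ^ 2 ≤ (1 + 1 / c) * ‖u‖ ^ 2 + (1 + c) * ‖v‖ ^ 2 := by
  have hyoung : (1 + 1 / c) * ‖u‖ ^ 2 + (1 + c) * ‖v‖ ^ 2 - (‖u‖ + ‖v‖) ^ 2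
      = (‖u‖ - c * ‖v‖) ^ 2 / c := by
    field_simp
    ring
  have := pow_le_pow_left₀ (norm_nonneg _) (norm_add_le u v) 2
  nlinarith [div_nonneg (sq_nonneg (‖u‖ - c * ‖v‖)) hc.le]

end NormSq

lemma EuclideanSpace.norm_sq_le_of_forall_sq_le {n : Type*} [Fintype n]
    {u v : EuclideanSpace ℝ n} {c : ℝ} (h : ∀ j, u j ^ 2 ≤ c * v j ^ 2) :
    ‖u‖ ^ 2 ≤ c * ‖v‖ ^ 2 := by
  simp only [EuclideanSpace.norm_sq_eq, Real.norm_eq_abs, sq_abs, mul_sum]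
  exact sum_le_sum fun j _ => h j

section Hadamard

variable {d : ℕ}

lemma had_apply (x y : EuclideanSpace ℝ (Fin d)) (j : Fin d) : had x y j = x j * y j := rfl

lemma vsqrt_apply (x : EuclideanSpace ℝ (Fin d)) (j : Fin d) : vsqrt x j = √(x j) := rfl

lemma had_add_left (x y z : EuclideanSpace ℝ (Fin d)) : had (x + y) z = had x z + had y z := by
  ext j
  simp only [had_apply, PiLp.add_apply, add_mul]

lemma had_add_right (x y z : EuclideanSpace ℝ (Fin d)) : had x (y + z) = had x y + had x z := by
  ext j
  simp only [had_apply, PiLp.add_apply, mul_add]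

lemma norm_had_sq_le_of_abs_le {u : EuclideanSpace ℝ (Fin d)} {c : ℝ} (hu : ∀ j, |u j| ≤ c)
    (v : EuclideanSpace ℝ (Fin d)) : ‖had u v‖ ^ 2 ≤ c ^ 2 * ‖v‖ ^ 2 := by
  refine EuclideanSpace.norm_sq_le_of_forall_sq_le fun j => ?_
  rw [had_apply, mul_pow]
  exact mul_le_mul_of_nonneg_right (sq_le_sq' (abs_le.1 (hu j)).1 (abs_le.1 (hu j)).2)
    (sq_nonneg _)

variable {η : EuclideanSpace ℝ (Fin d)} {c : ℝ}

lemma norm_had_vsqrt_sq_le (hη : ∀ j, 0 ≤ η j ∧ η j ≤ c) (w : EuclideanSpace ℝ (Fin d)) :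
    ‖had w (vsqrt η)‖ ^ 2 ≤ c * ‖w‖ ^ 2 := by
  refine EuclideanSpace.norm_sq_le_of_forall_sq_le fun j => ?_
  rw [had_apply, vsqrt_apply, mul_pow, Real.sq_sqrt (hη j).1, mul_comm c]
  exact mul_le_mul_of_nonneg_left (hη j).2 (sq_nonneg _)

lemma norm_had_sq_le_mul_norm_had_vsqrt_sq (hη : ∀ j, 0 ≤ η j ∧ η j ≤ c)
    (w : EuclideanSpace ℝ (Fin d)) : ‖had w η‖ ^ 2 ≤ c * ‖had w (vsqrt η)‖ ^ 2 := by
  refine EuclideanSpace.norm_sq_le_of_forall_sq_le fun j => ?_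
  obtain ⟨h0, hc⟩ := hη j
  rw [had_apply, had_apply, vsqrt_apply, mul_pow, mul_pow, Real.sq_sqrt h0, sq (η j)]
  have := mul_le_mul_of_nonneg_left (mul_le_mul_of_nonneg_right hc h0) (sq_nonneg (w j))
  linarith

end Hadamard

lemma norm_had_sq_le_of_norm_sub_le {d : ℕ} {g a v η ηprev : EuclideanSpace ℝ (Fin d)}
    {G c r s β : ℝ} (hβ : 0 < β) (hc : 0 ≤ c) (hg : ∀ j, |g j| ≤ G)
    (hηprev : ∀ j, 0 ≤ ηprev j ∧ ηprev j ≤ c) (hga : ‖g - a‖ ≤ r) (hav : ‖a - v‖ ^ 2 ≤ s) :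
    ‖had g η‖ ^ 2 ≤ (1 + 1 / β) * (c * (3 * (‖had v (vsqrt ηprev)‖ ^ 2 + c * s + c * r ^ 2)))
      + (1 + β) * (G ^ 2 * ‖η - ηprev‖ ^ 2) := by
  have hgr : ‖g - a‖ ^ 2 ≤ r ^ 2 := pow_le_pow_left₀ (norm_nonneg _) hga 2
  have hvsqrt : ‖had g (vsqrt ηprev)‖ ^ 2
      ≤ 3 * (‖had v (vsqrt ηprev)‖ ^ 2 + c * s + c * r ^ 2) := by
    have hdecomp : g = v + (a - v) + (g - a) := by abel
    calc ‖had g (vsqrt ηprev)‖ ^ 2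
        = ‖had v (vsqrt ηprev) + had (a - v) (vsqrt ηprev) + had (g - a) (vsqrt ηprev)‖ ^ 2 := by
          rw [← had_add_left, ← had_add_left, ← hdecomp]
      _ ≤ _ := norm_add₃_sq_le _ _ _
      _ ≤ _ := by
          gcongr
          · exact (norm_had_vsqrt_sq_le hηprev _).trans (by gcongr)
          · exact (norm_had_vsqrt_sq_le hηprev _).trans (by gcongr)
  calc ‖had g η‖ ^ 2 = ‖had g ηprev + had g (η - ηprev)‖ ^ 2 := by
        rw [← had_add_right, add_sub_cancel]
    _ ≤ (1 + 1 / β) * ‖had g ηprev‖ ^ 2 + (1 + β) * ‖had g (η - ηprev)‖ ^ 2 :=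
        norm_add_sq_le_young _ _ hβ
    _ ≤ _ := by
        gcongr
        · exact (norm_had_sq_le_mul_norm_had_vsqrt_sq hηprev g).trans (by gcongr)
        · exact norm_had_sq_le_of_abs_le hg _

theorem adasam_displacement_bound_general {d : ℕ} {ι : Type*}
    (B : Finset ι) (hB : B.Nonempty) (b : ℕ) (hb : b = B.card)
    (f : EuclideanSpace ℝ (Fin d) → ℝ) (fi : ι → EuclideanSpace ℝ (Fin d) → ℝ)
    (L G σ β₁ γ ρ ε β : ℝ)
    (hL : 0 ≤ L)
    (hfiL : ∀ i ∈ B, ∀ u v, ‖gradient (fi i) u - gradient (fi i) v‖ ≤ L * ‖u - v‖)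
    (hfiG : ∀ i ∈ B, ∀ y, ∀ j, |gradient (fi i) y j| ≤ G)
    (x s : EuclideanSpace ℝ (Fin d))
    (hvar : ‖(1 / (b : ℝ)) • ∑ i ∈ B, gradient (fi i) x - gradient f x‖ ^ 2 ≤ σ ^ 2 / b)
    (hρ : 0 ≤ ρ) (hε : 0 < ε) (hβ : 0 < β)
    (m : EuclideanSpace ℝ (Fin d)) (hm : ∀ j, |m j| ≤ G)
    (ηprev : EuclideanSpace ℝ (Fin d)) (hηprev : ∀ j, 0 ≤ ηprev j ∧ ηprev j ≤ 1 / ε)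
    (η : EuclideanSpace ℝ (Fin d)) :
    let g : EuclideanSpace ℝ (Fin d) :=
      (1 / (b : ℝ)) • ∑ i ∈ B, gradient (fi i) (x + (ρ / ‖s‖) • s)
    let Δ : EuclideanSpace ℝ (Fin d) :=
      (γ * β₁ / (1 - β₁)) • had m (ηprev - η) - γ • had g η
    (L / 2) * ‖Δ‖ ^ 2
      ≤ (L * G ^ 2 * γ ^ 2 * β₁ ^ 2 / (1 - β₁) ^ 2) * ‖η - ηprev‖ ^ 2
        + γ ^ 2 * L * ((3 * (1 + β) / (β * ε))
            * (‖had (gradient f x) (vsqrt ηprev)‖ ^ 2 + L ^ 2 * ρ ^ 2 / ε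
                + σ ^ 2 / ((b : ℝ) * ε))
          + (1 + β) * G ^ 2 * ‖η - ηprev‖ ^ 2) := by
  intro g Δ
  subst hb
  have hg : ∀ j, |g j| ≤ G := abs_avg_apply_le hB fun i hi => hfiG i hi _
  have hgx : ‖g - (1 / (#B : ℝ)) • ∑ i ∈ B, gradient (fi i) x‖ ≤ L * ρ :=
    (norm_avg_sub_avg_le hB hfiL _ _).trans <| by
      gcongr
      simpa using norm_smul_div_norm_le hρ s
  have hgη := norm_had_sq_le_of_norm_sub_le (η := η) hβ (one_div_nonneg.2 hε.le) hg hηprev hgx hvar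
  have hmη : ‖had m (ηprev - η)‖ ^ 2 ≤ G ^ 2 * ‖η - ηprev‖ ^ 2 := by
    rw [norm_sub_rev η]
    exact norm_had_sq_le_of_abs_le hm _
  calc (L / 2) * ‖Δ‖ ^ 2
      ≤ (L / 2) * (2 * (‖(γ * β₁ / (1 - β₁)) • had m (ηprev - η)‖ ^ 2 + ‖γ • had g η‖ ^ 2)) := by
        gcongr
        exact norm_sub_sq_le _ _
    _ = L * ((γ * β₁ / (1 - β₁)) ^ 2 * ‖had m (ηprev - η)‖ ^ 2 + γ ^ 2 * ‖had g η‖ ^ 2) := by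
        rw [norm_smul, norm_smul, mul_pow, mul_pow, Real.norm_eq_abs, Real.norm_eq_abs, sq_abs,
          sq_abs]
        ring
    _ ≤ L * ((γ * β₁ / (1 - β₁)) ^ 2 * (G ^ 2 * ‖η - ηprev‖ ^ 2)
          + γ ^ 2 * ((1 + 1 / β) * (1 / ε * (3 * (‖had (gradient f x) (vsqrt ηprev)‖ ^ 2
            + 1 / ε * (σ ^ 2 / #B) + 1 / ε * (L * ρ) ^ 2)))
            + (1 + β) * (G ^ 2 * ‖η - ηprev‖ ^ 2))) := by
        gcongr
    _ = _ := by
        field_simp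
        ring

/-- Bound on the squared displacement of the auxiliary sequence in the AdaSAM analysis:
with `g = (1/b) Σ_{i∈B} ∇f_i(x + ρs/‖s‖)` and
`Δ = (γβ₁/(1−β₁)) m ⊙ (η_prev − η) − γ (g ⊙ η)`,
`(L/2)‖Δ‖² ≤ (LG²γ²β₁²/(1−β₁)²)‖η − η_prev‖²
  + γ²L[(3(1+β)/(βε))(‖∇f(x) ⊙ √η_prev‖² + L²ρ²/ε + σ²/(bε)) + (1+β)G²‖η − η_prev‖²]`. -/
theorem adasam_displacement_bound {d : ℕ} (hd : 1 ≤ d) {ι : Type*}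
    (B : Finset ι) (hB : B.Nonempty) (b : ℕ) (hb : b = B.card)
    (f : EuclideanSpace ℝ (Fin d) → ℝ) (fi : ι → EuclideanSpace ℝ (Fin d) → ℝ)
    (L G σ β₁ γ ρ ε β : ℝ)
    (hf : Differentiable ℝ f)
    (hfi : ∀ i ∈ B, Differentiable ℝ (fi i))
    (hL : 0 ≤ L)
    (hfiL : ∀ i ∈ B, ∀ u v, ‖gradient (fi i) u - gradient (fi i) v‖ ≤ L * ‖u - v‖)
    (hfiG : ∀ i ∈ B, ∀ y, ∀ j, |gradient (fi i) y j| ≤ G)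
    (x s : EuclideanSpace ℝ (Fin d)) (hs : s ≠ 0)
    (hσ : 0 ≤ σ)
    (hvar : ‖(1 / (b : ℝ)) • ∑ i ∈ B, gradient (fi i) x - gradient f x‖ ^ 2 ≤ σ ^ 2 / b)
    (hβ₁ : β₁ ∈ Set.Ico (0 : ℝ) 1) (hρ : 0 ≤ ρ) (hε : 0 < ε) (hβ : 0 < β)
    (m : EuclideanSpace ℝ (Fin d)) (hm : ∀ j, |m j| ≤ G)
    (ηprev : EuclideanSpace ℝ (Fin d)) (hηprev : ∀ j, 0 ≤ ηprev j ∧ ηprev j ≤ 1 / ε)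
    (η : EuclideanSpace ℝ (Fin d)) :
    let g : EuclideanSpace ℝ (Fin d) :=
      (1 / (b : ℝ)) • ∑ i ∈ B, gradient (fi i) (x + (ρ / ‖s‖) • s)
    let Δ : EuclideanSpace ℝ (Fin d) :=
      (γ * β₁ / (1 - β₁)) • had m (ηprev - η) - γ • had g η
    (L / 2) * ‖Δ‖ ^ 2
      ≤ (L * G ^ 2 * γ ^ 2 * β₁ ^ 2 / (1 - β₁) ^ 2) * ‖η - ηprev‖ ^ 2
        + γ ^ 2 * L * ((3 * (1 + β) / (β * ε))
            * (‖had (gradient f x) (vsqrt ηprev)‖ ^ 2 + L ^ 2 * ρ ^ 2 / ε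
                + σ ^ 2 / ((b : ℝ) * ε))
          + (1 + β) * G ^ 2 * ‖η - ηprev‖ ^ 2) :=
  adasam_displacement_bound_general B hB b hb f fi L G σ β₁ γ ρ ε β hL hfiL hfiG x s hvar hρ hε hβ m
    hm ηprev hηprev η
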